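/- arXiv:1909.12334 — 4 statements merged into one kernel-verified Lean document; each statement's English description precedes it below -/
import Mathlib

section
/- The Brownian motion kernel K(x,y) = min(x,y) on [0,s]×[0,s] admits the uniformly convergent expansion K(x,y) = Σ over odd m ∈ ℕ of (4s²/(m²π²)) · (2/s) · sin(πmx/(2s)) · sin(πmy/(2s)). -/
/-!
The product-to-sum formula `2 sin(ma) sin(mb) = cos(m(a - b)) - cos(m(a + b))` reduces the
series to `∑_{m odd} cos(mθ)/m² = π²/8 - π|θ|/4` for `|θ| ≤ π`. That is the Bernoulli-polynomial
value `∑_{n ≥ 1} cos(nθ)/n² = π²/6 - πθ/2 + θ²/4` on `[0, 2π]` minus its even-index part, which is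
the same series at `2θ` divided by 4. For `a, b ∈ [0, π/2]` the two values differ by
`(π/4) min(a, b)`, and `a = πx/(2s)`, `b = πy/(2s)` rescales this to `min(x, y)`.
-/

open Real

theorem HasSum.ite_odd_of_hasSum_even {G : Type*} [AddCommGroup G] [TopologicalSpace G]
    [IsTopologicalAddGroup G] {f : ℕ → G} {a b : G} (hf : HasSum f a)
    (heven : HasSum (fun n ↦ f (2 * n)) b) :
    HasSum (fun m ↦ if Odd m then f m else 0) (a - b) := by
  have hsupp : ∀ m ∉ Set.range (fun n : ℕ ↦ 2 * n), (if Odd m then 0 else f m) = 0 := by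
    intro m hm
    have hodd : Odd m := Nat.not_even_iff_odd.mp fun ⟨r, hr⟩ ↦ hm ⟨r, by simp only; omega⟩
    simp [hodd]
  have hEven : HasSum (fun m ↦ if Odd m then 0 else f m) b := by
    rw [← (mul_right_injective₀ two_ne_zero).hasSum_iff hsupp]
    simpa [Function.comp_def, Nat.not_odd_iff_even.mpr (even_two_mul _)] using heven
  refine (hf.sub hEven).congr_fun fun m ↦ ?_
  split_ifs <;> simp

-- The `n = 0` term is `1 / 0 = 0`.
theorem hasSum_cos_nat_mul_div_sq {θ : ℝ} (h0 : 0 ≤ θ) (h2π : θ ≤ 2 * π) :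
    HasSum (fun n : ℕ ↦ cos (n * θ) / (n : ℝ) ^ 2) (π ^ 2 / 6 - π * θ / 2 + θ ^ 2 / 4) := by
  have hx : θ / (2 * π) ∈ Set.Icc (0 : ℝ) 1 :=
    ⟨by positivity, (div_le_one (by positivity)).mpr h2π⟩
  convert hasSum_one_div_nat_pow_mul_cos one_ne_zero hx using 1
  · ext n
    rw [mul_one, one_div_mul_eq_div]
    congr 2
    field_simp
  · rw [← bernoulliFun]
    norm_num [bernoulliFun_two, Nat.factorial]
    field_simp
    ring

theorem hasSum_odd_cos_nat_mul_div_sq {θ : ℝ} (hθ : |θ| ≤ π) :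
    HasSum (fun m : ℕ ↦ if Odd m then cos (m * θ) / (m : ℝ) ^ 2 else 0)
      (π ^ 2 / 8 - π * |θ| / 4) := by
  have hcos : ∀ m : ℕ, cos (m * θ) = cos (m * |θ|) := fun m ↦ by
    rw [← cos_abs (m * θ), abs_mul, Nat.abs_cast]
  simp only [hcos]
  have hπ := pi_pos
  have hall := hasSum_cos_nat_mul_div_sq (abs_nonneg θ) (by linarith)
  have heven : HasSum (fun n : ℕ ↦ cos ((2 * n : ℕ) * |θ|) / ((2 * n : ℕ) : ℝ) ^ 2)
      ((π ^ 2 / 6 - π * (2 * |θ|) / 2 + (2 * |θ|) ^ 2 / 4) / 4) := by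
    refine ((hasSum_cos_nat_mul_div_sq (θ := 2 * |θ|) (by positivity) (by linarith)).div_const 4
      ).congr_fun fun n ↦ ?_
    push_cast
    ring_nf
  rw [show π ^ 2 / 8 - π * |θ| / 4 = π ^ 2 / 6 - π * |θ| / 2 + |θ| ^ 2 / 4
    - (π ^ 2 / 6 - π * (2 * |θ|) / 2 + (2 * |θ|) ^ 2 / 4) / 4 by ring]
  exact hall.ite_odd_of_hasSum_even heven

theorem hasSum_odd_sin_mul_sin_div_sq {a b : ℝ} (ha : a ∈ Set.Icc 0 (π / 2))
    (hb : b ∈ Set.Icc 0 (π / 2)) :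
    HasSum (fun m : ℕ ↦ if Odd m then sin (m * a) * sin (m * b) / (m : ℝ) ^ 2 else 0)
      (π / 4 * min a b) := by
  obtain ⟨ha0, haπ⟩ := ha
  obtain ⟨hb0, hbπ⟩ := hb
  have hdiff := hasSum_odd_cos_nat_mul_div_sq (θ := a - b) (abs_le.mpr ⟨by linarith, by linarith⟩)
  have hsum := hasSum_odd_cos_nat_mul_div_sq (θ := a + b) (abs_le.mpr ⟨by linarith, by linarith⟩)
  rw [abs_of_nonneg (add_nonneg ha0 hb0)] at hsum
  have hmin : π / 4 * min a b =
      (π ^ 2 / 8 - π * |a - b| / 4 - (π ^ 2 / 8 - π * (a + b) / 4)) / 2 := by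
    rw [inf_eq_half_smul_add_sub_abs_sub' ℝ a b, smul_eq_mul, abs_sub_comm]
    ring
  rw [hmin]
  refine ((hdiff.sub hsum).div_const 2).congr_fun fun m ↦ ?_
  split_ifs
  · rw [mul_sub, mul_add, cos_sub, cos_add]
    ring
  · simp

/-- Fourier expansion of the Brownian motion kernel `min(x,y)` on `[0,s] × [0,s]`:
`min(x,y) = Σ_{m odd} (4s²/(m²π²)) · (2/s) · sin(πmx/(2s)) · sin(πmy/(2s))`. -/
theorem brownian_kernel_expansion (s : ℝ) (hs : 0 < s) (x y : ℝ)
    (hx : x ∈ Set.Icc 0 s) (hy : y ∈ Set.Icc 0 s) :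
    min x y =
      ∑' m : ℕ, if Odd m then
        (4 * s ^ 2 / ((m : ℝ) ^ 2 * π ^ 2)) * (2 / s) *
          Real.sin (π * m * x / (2 * s)) * Real.sin (π * m * y / (2 * s))
      else 0 := by
  have hscale : ∀ t ∈ Set.Icc 0 s, π * t / (2 * s) ∈ Set.Icc 0 (π / 2) := fun t ⟨ht0, hts⟩ ↦
    ⟨by positivity, by rw [div_le_iff₀ (by positivity)]; nlinarith [pi_pos]⟩
  have H := (hasSum_odd_sin_mul_sin_div_sq (hscale x hx) (hscale y hy)).mul_left (8 * s / π ^ 2)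
  calc min x y = 8 * s / π ^ 2 * (π / 4 * min (π * x / (2 * s)) (π * y / (2 * s))) := by
        rw [min_div_div_right (by positivity), ← mul_min_of_nonneg _ _ pi_pos.le]
        field_simp
        ring
    _ = _ := (H.congr_fun fun m ↦ ?_).tsum_eq.symm
  split_ifs
  · rw [show π * m * x / (2 * s) = m * (π * x / (2 * s)) by ring,
      show π * m * y / (2 * s) = m * (π * y / (2 * s)) by ring]
    field_simp
    ring
  · simp
end

section
/- For d ≥ 1 and s > 0 and any x, y in the closed ball of radius s in ℝ^d, one has ∫_{−s}^{s} ∫_{S^{d−1}} |1_{⟨z,x⟩ ≥ r} − 1_{⟨z,y⟩ ≥ r}|² dσ(z) dr = (Γ(d/2)/(√π · Γ((d+1)/2))) · ‖x − y‖. -/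
/-!
For `z` on the sphere, the `r`-integral of the squared difference of the two indicators is the
length `|⟪z, x⟫ - ⟪z, y⟫|` of the interval between the two thresholds, so by Fubini the left side
is `∫ |⟪z, x - y⟫| dσ`. Rotation invariance turns this into `c ‖x - y‖` with `c = ∫ |z₁| dσ`, and
`c` is found by integrating `|⟪z, w⟫| e^{-‖w‖²}` over `σ ⊗ volume` in both orders: integrating in
`w` first gives `π^{(d-1)/2}` for every unit `z`, integrating in `z` first gives
`c ∫ ‖w‖ e^{-‖w‖²} dw = c π^{d/2} Γ((d+1)/2) / Γ(d/2)`.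
-/

open MeasureTheory Real Module
open scoped InnerProductSpace

variable {E : Type*} [NormedAddCommGroup E] [InnerProductSpace ℝ E] [MeasurableSpace E]
  [BorelSpace E]

section Rotation

variable {μ : Measure E}

theorem integral_comp_inner_eq_of_norm_eq (hμ : ∀ f : E ≃ₗᵢ[ℝ] E, μ.map f = μ)
    (φ : ℝ → ℝ → ℝ) {u v : E} (h : ‖u‖ = ‖v‖) :
    ∫ z, φ ⟪z, u⟫_ℝ ‖z‖ ∂μ = ∫ z, φ ⟪z, v⟫_ℝ ‖z‖ ∂μ := by
  let f : E ≃ₗᵢ[ℝ] E := Submodule.reflection (ℝ ∙ (v - u))ᗮ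
  have hfv : f v = u := Submodule.reflection_sub h.symm
  have hf : MeasurePreserving f μ μ := ⟨f.continuous.measurable, hμ f⟩
  rw [← hf.integral_comp f.toHomeomorph.measurableEmbedding]
  congr 1 with z
  rw [← hfv, f.inner_map_map, f.norm_map]

theorem integral_abs_inner_eq_mul_norm (hμ : ∀ f : E ≃ₗᵢ[ℝ] E, μ.map f = μ) {e : E}
    (he : ‖e‖ = 1) (w : E) :
    ∫ z, |⟪z, w⟫_ℝ| ∂μ = (∫ z, |⟪z, e⟫_ℝ| ∂μ) * ‖w‖ := by
  obtain rfl | hw := eq_or_ne w 0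
  · simp
  have hw' : ‖w‖ ≠ 0 := norm_ne_zero_iff.2 hw
  have hu : ‖(‖w‖⁻¹ : ℝ) • w‖ = ‖e‖ := by
    rw [he, norm_smul, norm_inv, norm_norm, inv_mul_cancel₀ hw']
  calc ∫ z, |⟪z, w⟫_ℝ| ∂μ = ∫ z, |⟪z, (‖w‖⁻¹ : ℝ) • w⟫_ℝ| * ‖w‖ ∂μ := by
        congr 1 with z
        rw [real_inner_smul_right, abs_mul, abs_inv, abs_norm]
        field_simp
    _ = _ := by
        rw [integral_mul_const, integral_comp_inner_eq_of_norm_eq hμ (fun a _ ↦ |a|) hu]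

end Rotation

section Gaussian

variable [FiniteDimensional ℝ E]

theorem pow_sub_one_smul_mul_exp_neg_sq {n : ℕ} (hn : 1 ≤ n) (y : ℝ) :
    y ^ (n - 1) • (y * exp (-y ^ 2)) = y ^ (n : ℝ) * exp (-y ^ (2 : ℝ)) := by
  rw [smul_eq_mul, ← mul_assoc, ← pow_succ, Nat.sub_add_cancel hn, rpow_natCast, rpow_two]

theorem integrable_norm_mul_exp_neg_norm_sq [Nontrivial E] :
    Integrable (fun x : E ↦ ‖x‖ * exp (-‖x‖ ^ 2)) := by
  rw [integrable_fun_norm_addHaar volume (f := fun y ↦ y * exp (-y ^ 2))]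
  refine (integrableOn_rpow_mul_exp_neg_rpow ?_ two_pos).congr_fun
    (fun y _ ↦ (pow_sub_one_smul_mul_exp_neg_sq finrank_pos y).symm) measurableSet_Ioi
  linarith [(finrank ℝ E).cast_nonneg (α := ℝ)]

theorem integral_norm_mul_exp_neg_norm_sq [Nontrivial E] :
    ∫ x : E, ‖x‖ * exp (-‖x‖ ^ 2) =
      √π ^ finrank ℝ E * Gamma ((finrank ℝ E + 1) / 2) / Gamma (finrank ℝ E / 2) := by
  have hn : (0 : ℝ) < finrank ℝ E := Nat.cast_pos.2 finrank_pos
  rw [integral_fun_norm_addHaar volume (fun y ↦ y * exp (-y ^ 2)),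
    setIntegral_congr_fun measurableSet_Ioi
      (fun y _ ↦ pow_sub_one_smul_mul_exp_neg_sq finrank_pos y),
    integral_rpow_mul_exp_neg_rpow two_pos (by linarith), measureReal_def,
    InnerProductSpace.volume_ball, ENNReal.ofReal_one, one_pow, one_mul,
    ENNReal.toReal_ofReal (by positivity), Gamma_add_one (by positivity), nsmul_eq_mul,
    smul_eq_mul]
  field_simp

theorem integral_abs_mul_exp_neg_sq : ∫ t : ℝ, |t| * exp (-t ^ 2) = 1 := by
  have h := integral_norm_mul_exp_neg_norm_sq (E := ℝ)
  simp only [Real.norm_eq_abs, sq_abs, finrank_self] at h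
  rw [h]
  norm_num [Gamma_one_half_eq, (sqrt_pos.2 pi_pos).ne']

theorem EuclideanSpace.integral_abs_apply_mul_exp_neg_norm_sq {d : ℕ} (i : Fin d) :
    ∫ w : EuclideanSpace ℝ (Fin d), |w i| * exp (-‖w‖ ^ 2) = √π ^ (d - 1) := by
  have hprod : ∀ w : EuclideanSpace ℝ (Fin d), |w i| * exp (-‖w‖ ^ 2) =
      ∏ j, (if j = i then |w j| else 1) * exp (-w j ^ 2) := by
    intro w
    rw [Finset.prod_mul_distrib, Finset.prod_ite_eq', ← exp_sum, EuclideanSpace.norm_sq_eq]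
    simp [Finset.sum_neg_distrib]
  have hfactor : ∀ j : Fin d, ∫ t : ℝ, (if j = i then |t| else 1) * exp (-t ^ 2) =
      if j = i then 1 else √π := by
    intro j
    split_ifs
    · exact integral_abs_mul_exp_neg_sq
    · simpa using integral_gaussian 1
  simp_rw [hprod]
  rw [← (PiLp.volume_preserving_toLp (Fin d)).integral_comp
      (MeasurableEquiv.toLp 2 (Fin d → ℝ)).measurableEmbedding,
    integral_fintype_prod_volume_eq_prod (fun j t ↦ (if j = i then |t| else 1) * exp (-t ^ 2))]
  simp_rw [hfactor]
  rw [Finset.prod_ite, Finset.prod_const_one, one_mul, Finset.prod_const, Finset.filter_ne',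
    Finset.card_erase_of_mem (Finset.mem_univ i), Finset.card_univ, Fintype.card_fin]

theorem integrable_abs_inner_mul_exp_neg_norm_sq [Nontrivial E] {σ : Measure E}
    (hσ : Integrable (fun z ↦ ‖z‖) σ) :
    Integrable (Function.uncurry fun z w : E ↦ |⟪z, w⟫_ℝ| * exp (-‖w‖ ^ 2)) (σ.prod volume) := by
  refine (hσ.mul_prod integrable_norm_mul_exp_neg_norm_sq).mono' (by fun_prop)
    (.of_forall fun ⟨z, w⟩ ↦ ?_)
  rw [Function.uncurry_apply_pair, norm_of_nonneg (by positivity), ← mul_assoc]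
  gcongr
  exact abs_real_inner_le_norm z w

end Gaussian

section Sphere

variable {d : ℕ} {σ : Measure (EuclideanSpace ℝ (Fin d))}

theorem integral_abs_inner_mul_exp_neg_norm_sq_of_norm_eq_one (hd : 1 ≤ d)
    {z : EuclideanSpace ℝ (Fin d)} (hz : ‖z‖ = 1) :
    ∫ w : EuclideanSpace ℝ (Fin d), |⟪z, w⟫_ℝ| * exp (-‖w‖ ^ 2) = √π ^ (d - 1) := by
  let i : Fin d := ⟨0, hd⟩
  have he : ‖z‖ = ‖EuclideanSpace.single i (1 : ℝ)‖ := by simp [hz]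
  simp_rw [real_inner_comm _ z]
  rw [integral_comp_inner_eq_of_norm_eq (fun f ↦ f.measurePreserving.map_eq)
    (fun a r ↦ |a| * exp (-r ^ 2)) he]
  simp only [EuclideanSpace.inner_single_right, one_mul, conj_trivial]
  exact EuclideanSpace.integral_abs_apply_mul_exp_neg_norm_sq i

theorem integral_abs_inner_mul_integral_norm_mul_exp_neg_norm_sq (hd : 1 ≤ d)
    [IsProbabilityMeasure σ] (hsphere : ∀ᵐ z ∂σ, ‖z‖ = 1)
    (hinv : ∀ f : EuclideanSpace ℝ (Fin d) ≃ₗᵢ[ℝ] EuclideanSpace ℝ (Fin d), σ.map f = σ)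
    {e : EuclideanSpace ℝ (Fin d)} (he : ‖e‖ = 1) :
    (∫ z, |⟪z, e⟫_ℝ| ∂σ) * ∫ w : EuclideanSpace ℝ (Fin d), ‖w‖ * exp (-‖w‖ ^ 2) =
      √π ^ (d - 1) := by
  have : Nonempty (Fin d) := ⟨⟨0, hd⟩⟩
  have hnorm : Integrable (fun z ↦ ‖z‖) σ :=
    (integrable_const 1).congr (hsphere.mono fun z hz ↦ hz.symm)
  calc _ = ∫ w, ∫ z, |⟪z, w⟫_ℝ| * exp (-‖w‖ ^ 2) ∂σ := by
        rw [← integral_const_mul]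
        congr 1 with w
        rw [integral_mul_const, integral_abs_inner_eq_mul_norm hinv he w]
        ring
    _ = ∫ z, (∫ w, |⟪z, w⟫_ℝ| * exp (-‖w‖ ^ 2)) ∂σ :=
        (integral_integral_swap (integrable_abs_inner_mul_exp_neg_norm_sq hnorm)).symm
    _ = ∫ z, √π ^ (d - 1) ∂σ := integral_congr_ae <| hsphere.mono fun z hz ↦
        integral_abs_inner_mul_exp_neg_norm_sq_of_norm_eq_one hd hz
    _ = √π ^ (d - 1) := by simp

theorem integral_abs_inner_eq_gamma_div_mul_norm (hd : 1 ≤ d) [IsProbabilityMeasure σ]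
    (hsphere : ∀ᵐ z ∂σ, ‖z‖ = 1)
    (hinv : ∀ f : EuclideanSpace ℝ (Fin d) ≃ₗᵢ[ℝ] EuclideanSpace ℝ (Fin d), σ.map f = σ)
    (w : EuclideanSpace ℝ (Fin d)) :
    ∫ z, |⟪z, w⟫_ℝ| ∂σ = Gamma (d / 2) / (√π * Gamma ((d + 1) / 2)) * ‖w‖ := by
  have : Nonempty (Fin d) := ⟨⟨0, hd⟩⟩
  let e : EuclideanSpace ℝ (Fin d) := EuclideanSpace.single ⟨0, hd⟩ 1
  have he : ‖e‖ = 1 := by simp [e]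
  have key := integral_abs_inner_mul_integral_norm_mul_exp_neg_norm_sq hd hsphere hinv he
  rw [integral_norm_mul_exp_neg_norm_sq, finrank_euclideanSpace_fin,
    ← pow_sub_one_mul (by omega)] at key
  have hΓ : 0 < Gamma (d / 2) := Gamma_pos_of_pos (by positivity)
  have hπ : 0 < √π := sqrt_pos.2 pi_pos
  rw [integral_abs_inner_eq_mul_norm hinv he w]
  congr 1
  rw [eq_div_iff (by positivity)]
  field_simp at key
  rw [← key]
  ring

end Sphere

section Discrepancy

theorem integral_Ioc_sq_abs_ite_sub {s a b : ℝ} (ha : |a| ≤ s) (hb : |b| ≤ s) :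
    ∫ r in Set.Ioc (-s) s, |(if r ≤ a then (1 : ℝ) else 0) - (if r ≤ b then 1 else 0)| ^ 2 =
      |a - b| := by
  have hind : ∀ r, |(if r ≤ a then (1 : ℝ) else 0) - (if r ≤ b then 1 else 0)| ^ 2 =
      (Set.Ioc (min a b) (max a b)).indicator (fun _ ↦ 1) r := by
    intro r
    simp only [Set.indicator_apply, Set.mem_Ioc, min_lt_iff, le_max_iff]
    split_ifs <;> grind
  have hsub : Set.Ioc (min a b) (max a b) ⊆ Set.Ioc (-s) s := by
    apply Set.Ioc_subset_Ioc <;> grind [abs_le]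
  simp_rw [hind]
  rw [setIntegral_indicator measurableSet_Ioc, Set.inter_eq_self_of_subset_right hsub,
    setIntegral_const, volume_real_Ioc_of_le min_le_max, smul_eq_mul, mul_one,
    max_sub_min_eq_abs']

theorem measurable_ite_le_inner (x : E) :
    Measurable fun p : ℝ × E ↦ if p.1 ≤ ⟪p.2, x⟫_ℝ then (1 : ℝ) else 0 :=
  .ite (measurableSet_le measurable_fst (by fun_prop)) measurable_const measurable_const

theorem integrable_sq_abs_ite_le_inner_sub (μ : Measure ℝ) [IsFiniteMeasure μ] (σ : Measure E)
    [IsFiniteMeasure σ] (x y : E) :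
    Integrable (Function.uncurry fun (r : ℝ) (z : E) ↦
      |(if r ≤ ⟪z, x⟫_ℝ then (1 : ℝ) else 0) - (if r ≤ ⟪z, y⟫_ℝ then 1 else 0)| ^ 2)
      (μ.prod σ) := by
  refine (integrable_const 1).mono' (((measurable_ite_le_inner x).sub
    (measurable_ite_le_inner y)).abs.pow_const 2).aestronglyMeasurable
    (.of_forall fun ⟨r, z⟩ ↦ ?_)
  simp only [Function.uncurry_apply_pair]
  split_ifs <;> norm_num

end Discrepancy

theorem halfspace_discrepancy_eq_dist_general (d : ℕ) (hd : 1 ≤ d) (s : ℝ)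
    (σ : Measure (EuclideanSpace ℝ (Fin d))) (hσ : IsProbabilityMeasure σ)
    (hsupp : σ (Metric.sphere (0 : EuclideanSpace ℝ (Fin d)) 1) = 1)
    (hinv : ∀ f : EuclideanSpace ℝ (Fin d) ≃ₗᵢ[ℝ] EuclideanSpace ℝ (Fin d),
      σ.map f = σ)
    (x y : EuclideanSpace ℝ (Fin d)) (hx : ‖x‖ ≤ s) (hy : ‖y‖ ≤ s) :
    (∫ r in (-s)..s, ∫ z,
        |(if r ≤ (inner ℝ z x : ℝ) then (1 : ℝ) else 0) -
         (if r ≤ (inner ℝ z y : ℝ) then (1 : ℝ) else 0)| ^ 2 ∂σ) =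
    (Real.Gamma (d / 2) / (Real.sqrt π * Real.Gamma ((d + 1) / 2))) * ‖x - y‖ := by
  have hsphere : ∀ᵐ z ∂σ, ‖z‖ = 1 :=
    ((ae_mem_iff_measure_eq Metric.isClosed_sphere.measurableSet.nullMeasurableSet).2
      (by rw [hsupp, measure_univ])).mono fun z hz ↦ mem_sphere_zero_iff_norm.1 hz
  have hslice : ∀ᵐ z ∂σ, ∫ r in Set.Ioc (-s) s,
      |(if r ≤ ⟪z, x⟫_ℝ then (1 : ℝ) else 0) - (if r ≤ ⟪z, y⟫_ℝ then 1 else 0)| ^ 2 =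
        |⟪z, x - y⟫_ℝ| := by
    filter_upwards [hsphere] with z hz
    have hbound {v} (hv : ‖v‖ ≤ s) : |⟪z, v⟫_ℝ| ≤ s :=
      (abs_real_inner_le_norm z v).trans (by rwa [hz, one_mul])
    rw [inner_sub_right]
    exact integral_Ioc_sq_abs_ite_sub (hbound hx) (hbound hy)
  rw [intervalIntegral.integral_of_le (by linarith [norm_nonneg x]),
    integral_integral_swap (integrable_sq_abs_ite_le_inner_sub _ σ x y), integral_congr_ae hslice,
    integral_abs_inner_eq_gamma_div_mul_norm hd hsphere hinv]

/-- For `d ≥ 1`, `s > 0`, and the normalized rotation-invariant surface measure `σ` on the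
unit sphere `S^{d-1} ⊂ ℝ^d`, the L₂-discrepancy of two point measures with respect to the
family of half-spaces `{z : ⟨z,w⟩ ≥ r}` equals `(Γ(d/2)/(√π Γ((d+1)/2))) ‖x - y‖` on the
closed ball of radius `s`. -/
theorem halfspace_discrepancy_eq_dist (d : ℕ) (hd : 1 ≤ d) (s : ℝ) (hs : 0 < s)
    (σ : Measure (EuclideanSpace ℝ (Fin d))) (hσ : IsProbabilityMeasure σ)
    (hsupp : σ (Metric.sphere (0 : EuclideanSpace ℝ (Fin d)) 1) = 1)
    (hinv : ∀ f : EuclideanSpace ℝ (Fin d) ≃ₗᵢ[ℝ] EuclideanSpace ℝ (Fin d),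
      σ.map f = σ)
    (x y : EuclideanSpace ℝ (Fin d)) (hx : ‖x‖ ≤ s) (hy : ‖y‖ ≤ s) :
    (∫ r in (-s)..s, ∫ z,
        |(if r ≤ (inner ℝ z x : ℝ) then (1 : ℝ) else 0) -
         (if r ≤ (inner ℝ z y : ℝ) then (1 : ℝ) else 0)| ^ 2 ∂σ) =
    (Real.Gamma (d / 2) / (Real.sqrt π * Real.Gamma ((d + 1) / 2))) * ‖x - y‖ :=
  halfspace_discrepancy_eq_dist_general d hd s σ hσ hsupp hinv x y hx hy
end

section
/- For α > 0, k ∈ ℕ, ω ∈ ℂ \ {0} and r > 0: ∫₀^r J_α(ωs) · s^{α+2k+1} ds = Σ_{i=0}^{k} (2^i (−k)_i / ω^{i+1}) · J_{α+i+1}(ωr) · r^{α+2k+1−i}, where J_ν is the Bessel function of the first kind and (−k)_i is the Pochhammer symbol. -/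
open MeasureTheory Complex

/-- The Bessel function of the first kind of (real) order `α`, as a function of a complex
argument, defined by its power series `J_α(z) = Σ_j (-1)^j (z/2)^(α+2j) / (j! Γ(α+j+1))`. -/
noncomputable def besselJ (α : ℝ) (z : ℂ) : ℂ :=
  ∑' j : ℕ, ((-1) ^ j / ((j.factorial : ℂ) * Complex.Gamma ((α : ℂ) + j + 1))) *
    (z / 2) ^ ((α : ℂ) + 2 * j)

/-- The Pochhammer symbol (rising factorial) `(a)_n = a(a+1)⋯(a+n-1)` in `ℂ`. -/
noncomputable def pochC (a : ℂ) (n : ℕ) : ℂ := ∏ j ∈ Finset.range n, (a + j)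

/-!
By the power series, `J_α(ωs) s^(α+2k+1) = ∑_j c_j (ω/2)^(α+2j) s^(2α+2k+1+2j)` with
`c_j = (-1)^j / (j! Γ(α+j+1))`, and this may be integrated termwise because the integrated series
converges absolutely. Expanding each `J_(α+i+1)(ωr)` on the right as well and writing
`β = α+j+1`, the identity `Γ(β+i+1) = Γ(β) (β)_(i+1)` turns the `j`-th terms on the right into
`c_j (ω/2)^(α+2j) r^(2α+2k+2+2j)` times `½ ∑_(i ≤ k) (-k)_i / (β)_(i+1)`. This terminating sum
telescopes to `1 / (2(β+k))`, exactly the factor produced by integrating `s^(2α+2k+1+2j)`.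
-/

open Finset

lemma pochC_succ (a : ℂ) (n : ℕ) : pochC a (n + 1) = pochC a n * (a + n) :=
  prod_range_succ _ _

lemma pochC_neg_natCast_succ_self (k : ℕ) : pochC (-(k : ℂ)) (k + 1) = 0 :=
  prod_eq_zero (self_mem_range_succ k) (by simp)

lemma pochC_ne_zero {a : ℂ} (ha : ∀ m : ℕ, a + m ≠ 0) (n : ℕ) : pochC a n ≠ 0 :=
  prod_ne_zero_iff.mpr fun m _ => ha m

lemma sum_range_pochC_div_pochC_succ {a β : ℂ} (hβ : ∀ m : ℕ, β + m ≠ 0) (haβ : β - a ≠ 0)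
    (n : ℕ) :
    ∑ i ∈ range n, pochC a i / pochC β (i + 1) = (1 - pochC a n / pochC β n) / (β - a) := by
  induction n with
  | zero => simp [pochC]
  | succ n ih =>
    have := pochC_ne_zero hβ n
    have := hβ n
    rw [sum_range_succ, ih, pochC_succ, pochC_succ]
    field_simp
    ring

lemma sum_range_pochC_neg_div_pochC_succ {β : ℂ} (hβ : ∀ m : ℕ, β + m ≠ 0) (k : ℕ) :
    ∑ i ∈ range (k + 1), pochC (-(k : ℂ)) i / pochC β (i + 1) = 1 / (β + k) := by
  rw [sum_range_pochC_div_pochC_succ hβ (by simpa using hβ k), pochC_neg_natCast_succ_self]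
  simp

lemma Complex.Gamma_add_nat_eq_mul_pochC {β : ℂ} (hβ : ∀ m : ℕ, β + m ≠ 0) (n : ℕ) :
    Gamma (β + n) = Gamma β * pochC β n := by
  induction n with
  | zero => simp [pochC]
  | succ n ih =>
    rw [Nat.cast_succ, ← add_assoc, Gamma_add_one _ (hβ n), ih, pochC_succ]
    ring

lemma Real.Gamma_le_Gamma_add_nat {b : ℝ} (hb : 1 ≤ b) (n : ℕ) :
    Real.Gamma b ≤ Real.Gamma (b + n) := by
  induction n with
  | zero => simp
  | succ n ih =>
    have hpos : 0 < Real.Gamma (b + n) := Real.Gamma_pos_of_pos (by positivity)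
    rw [Nat.cast_succ, ← add_assoc, Real.Gamma_add_one (by positivity)]
    nlinarith [(n.cast_nonneg : (0 : ℝ) ≤ n)]

noncomputable def besselJCoeff (α : ℝ) (j : ℕ) : ℂ :=
  (-1) ^ j / ((j.factorial : ℂ) * Gamma ((α : ℂ) + j + 1))

lemma besselJ_eq_tsum (α : ℝ) (z : ℂ) :
    besselJ α z = ∑' j : ℕ, besselJCoeff α j * (z / 2) ^ ((α : ℂ) + 2 * j) := rfl

lemma ofReal_add_natCast_add_one_add_natCast_ne_zero {α : ℝ} (hα : -1 < α) (j m : ℕ) :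
    (α : ℂ) + j + 1 + m ≠ 0 := by
  have : (0 : ℝ) < α + j + 1 + m := by
    linarith [(j.cast_nonneg : (0 : ℝ) ≤ j), (m.cast_nonneg : (0 : ℝ) ≤ m)]
  exact_mod_cast this.ne'

lemma besselJCoeff_add_nat {α : ℝ} (hα : -1 < α) (n j : ℕ) :
    besselJCoeff (α + n) j = besselJCoeff α j / pochC ((α : ℂ) + j + 1) n := by
  rw [besselJCoeff, besselJCoeff, show ((α + n : ℝ) : ℂ) + j + 1 = (α : ℂ) + j + 1 + n by
      push_cast; ring,
    Gamma_add_nat_eq_mul_pochC (ofReal_add_natCast_add_one_add_natCast_ne_zero hα j), div_div,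
    mul_assoc]

lemma norm_besselJCoeff_le {α : ℝ} (hα : 0 ≤ α) (j : ℕ) :
    ‖besselJCoeff α j‖ ≤ (Real.Gamma (α + 1))⁻¹ * (j.factorial : ℝ)⁻¹ := by
  have hcast : (α : ℂ) + j + 1 = ((α + 1 + j : ℝ) : ℂ) := by push_cast; ring
  rw [besselJCoeff, hcast, Gamma_ofReal, norm_div, norm_pow, norm_neg, norm_one, one_pow,
    norm_mul, Complex.norm_natCast, Complex.norm_real, Real.norm_of_nonneg
      (Real.Gamma_pos_of_pos (by positivity)).le, one_div, mul_inv, mul_comm]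
  gcongr
  exact Real.Gamma_le_Gamma_add_nat (by linarith) j

lemma summable_norm_besselJ_term {α : ℝ} (hα : 0 ≤ α) (z : ℂ) :
    Summable fun j : ℕ => ‖besselJCoeff α j * (z / 2) ^ ((α : ℂ) + 2 * j)‖ := by
  have hnorm : ∀ j : ℕ, ‖(z / 2) ^ ((α : ℂ) + 2 * j)‖ = ‖z / 2‖ ^ α * (‖z / 2‖ ^ 2) ^ j := by
    intro j
    rw [show (α : ℂ) + 2 * j = ((α + 2 * j : ℝ) : ℂ) by push_cast; ring, norm_cpow_real,
      Real.rpow_add_of_nonneg (norm_nonneg _) hα (by positivity), ← pow_mul,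
      ← Real.rpow_natCast]
    push_cast
    rfl
  refine Summable.of_nonneg_of_le (fun j => norm_nonneg _) (fun j => ?_)
    (((Real.summable_pow_div_factorial (‖z / 2‖ ^ 2)).mul_left
      ((Real.Gamma (α + 1))⁻¹ * ‖z / 2‖ ^ α)))
  rw [norm_mul, hnorm]
  calc ‖besselJCoeff α j‖ * (‖z / 2‖ ^ α * (‖z / 2‖ ^ 2) ^ j)
      ≤ (Real.Gamma (α + 1))⁻¹ * (j.factorial : ℝ)⁻¹ * (‖z / 2‖ ^ α * (‖z / 2‖ ^ 2) ^ j) := by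
        gcongr
        exact norm_besselJCoeff_le hα j
    _ = _ := by ring

lemma summable_besselJ_term {α : ℝ} (hα : 0 ≤ α) (z : ℂ) :
    Summable fun j : ℕ => besselJCoeff α j * (z / 2) ^ ((α : ℂ) + 2 * j) :=
  (summable_norm_besselJ_term hα z).of_norm

lemma integral_ofReal_cpow_of_neg_one_lt {e : ℝ} (he : -1 < e) (r : ℝ) :
    ∫ s in (0 : ℝ)..r, (s : ℂ) ^ (e : ℂ) = (r : ℂ) ^ ((e : ℂ) + 1) / ((e : ℂ) + 1) := by
  rw [integral_cpow (Or.inl (by simpa using he)), ofReal_zero,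
    zero_cpow (by exact_mod_cast (by linarith : e + 1 ≠ 0)), sub_zero]

lemma setIntegral_norm_mul_ofReal_cpow {a : ℂ} {e r : ℝ} (he : -1 < e) (hr : 0 ≤ r) :
    ∫ s in Set.Ioc 0 r, ‖a * (s : ℂ) ^ (e : ℂ)‖ =
      ‖a * (r : ℂ) ^ ((e : ℂ) + 1) / ((e : ℂ) + 1)‖ := by
  have he1 : 0 < e + 1 := by linarith
  rw [← intervalIntegral.integral_of_le hr, intervalIntegral.integral_congr_ae (g := fun s => ‖a‖ * s ^ e)
    (Filter.Eventually.of_forall fun s hs => ?_)]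
  · rw [intervalIntegral.integral_const_mul, integral_rpow (Or.inl he),
      Real.zero_rpow he1.ne', sub_zero, norm_div, norm_mul,
      show (e : ℂ) + 1 = ((e + 1 : ℝ) : ℂ) by push_cast; ring, norm_cpow_real, norm_real,
      norm_real, Real.norm_of_nonneg hr, Real.norm_of_nonneg he1.le, mul_div_assoc]
  · rw [Set.uIoc_of_le hr] at hs
    rw [norm_mul, norm_cpow_eq_rpow_re_of_pos hs.1, ofReal_re]

theorem intervalIntegral_tsum_mul_ofReal_cpow {a : ℕ → ℂ} {e : ℕ → ℝ} {r : ℝ} (hr : 0 ≤ r)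
    (he : ∀ j, -1 < e j)
    (hsum : Summable fun j => ‖a j * (r : ℂ) ^ ((e j : ℂ) + 1) / ((e j : ℂ) + 1)‖) :
    ∫ s in (0 : ℝ)..r, ∑' j, a j * (s : ℂ) ^ (e j : ℂ) =
      ∑' j, a j * (r : ℂ) ^ ((e j : ℂ) + 1) / ((e j : ℂ) + 1) := by
  have hint : ∀ j, IntegrableOn (fun s : ℝ => a j * (s : ℂ) ^ (e j : ℂ)) (Set.Ioc 0 r) := fun j =>
    ((intervalIntegrable_iff_integrableOn_Ioc_of_le hr).mp
      (intervalIntegral.intervalIntegrable_cpow' (by simpa using he j))).const_mul _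
  rw [intervalIntegral.integral_of_le hr, ← integral_tsum_of_summable_integral_norm hint
    (by simpa only [setIntegral_norm_mul_ofReal_cpow (he _) hr] using hsum)]
  refine tsum_congr fun j => ?_
  rw [← intervalIntegral.integral_of_le hr, intervalIntegral.integral_const_mul,
    integral_ofReal_cpow_of_neg_one_lt (he j), mul_div_assoc]

/-- `(x * y) ^ c = x ^ c * y ^ c` fails for general complex `x`, `y`, but multiplying by a
positive real does not change the argument, so `log (s * z) = log s + log z`. -/
lemma Complex.ofReal_mul_cpow {s : ℝ} (hs : 0 < s) (z c : ℂ) :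
    ((s : ℂ) * z) ^ c = (s : ℂ) ^ c * z ^ c := by
  rcases eq_or_ne z 0 with rfl | hz
  · rcases eq_or_ne c 0 with rfl | hc
    · simp
    · simp [zero_cpow hc]
  have hs' : (s : ℂ) ≠ 0 := ofReal_ne_zero.mpr hs.ne'
  rw [cpow_def_of_ne_zero (mul_ne_zero hs' hz), cpow_def_of_ne_zero hs', cpow_def_of_ne_zero hz,
    log_ofReal_mul hs hz, add_mul, exp_add, ofReal_log hs.le]

lemma besselJ_mul_cpow_eq_tsum (α : ℝ) (k : ℕ) (ω : ℂ) {s : ℝ} (hs : 0 < s) :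
    besselJ α (ω * s) * (s : ℂ) ^ ((α : ℂ) + 2 * k + 1) =
      ∑' j : ℕ, besselJCoeff α j * (ω / 2) ^ ((α : ℂ) + 2 * j) *
        (s : ℂ) ^ ((2 * α + 2 * k + 1 + 2 * j : ℝ) : ℂ) := by
  have hs' : (s : ℂ) ≠ 0 := ofReal_ne_zero.mpr hs.ne'
  rw [besselJ_eq_tsum, ← tsum_mul_right]
  refine tsum_congr fun j => ?_
  rw [mul_comm ω, mul_div_assoc, ofReal_mul_cpow hs, show ((2 * α + 2 * k + 1 + 2 * j : ℝ) : ℂ)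
    = ((α : ℂ) + 2 * j) + ((α : ℂ) + 2 * k + 1) by push_cast; ring,
    cpow_add ((α : ℂ) + 2 * j) _ hs']
  ring

lemma besselJ_moment_term_eq_sum {α : ℝ} (hα : -1 < α) (k j : ℕ) {ω : ℂ} (hω : ω ≠ 0) {r : ℝ}
    (hr : 0 < r) :
    besselJCoeff α j * (ω / 2) ^ ((α : ℂ) + 2 * j) *
        (r : ℂ) ^ (((2 * α + 2 * k + 1 + 2 * j : ℝ) : ℂ) + 1) /
          (((2 * α + 2 * k + 1 + 2 * j : ℝ) : ℂ) + 1) =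
      ∑ i ∈ range (k + 1), 2 ^ i * pochC (-(k : ℂ)) i / ω ^ (i + 1) *
        (besselJCoeff (α + i + 1) j * (ω * r / 2) ^ (((α + i + 1 : ℝ) : ℂ) + 2 * j)) *
          (r : ℂ) ^ ((α : ℂ) + 2 * k + 1 - i) := by
  have hβ := ofReal_add_natCast_add_one_add_natCast_ne_zero hα j
  have hr' : (r : ℂ) ≠ 0 := ofReal_ne_zero.mpr hr.ne'
  have hx : ω * r / 2 ≠ 0 := by simp [hω, hr']
  have hsummand : ∀ i : ℕ, 2 ^ i * pochC (-(k : ℂ)) i / ω ^ (i + 1) *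
      (besselJCoeff (α + i + 1) j * (ω * r / 2) ^ (((α + i + 1 : ℝ) : ℂ) + 2 * j)) *
        (r : ℂ) ^ ((α : ℂ) + 2 * k + 1 - i) =
      pochC (-(k : ℂ)) i / pochC ((α : ℂ) + j + 1) (i + 1) * (besselJCoeff α j *
        (ω * r / 2) ^ ((α : ℂ) + 2 * j) * (r : ℂ) ^ ((α : ℂ) + 2 * k + 2) / 2) := by
    intro i
    have hP := pochC_ne_zero hβ (i + 1)
    rw [show α + i + 1 = α + ((i + 1 : ℕ) : ℝ) by push_cast; ring, besselJCoeff_add_nat hα,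
      show ((α + (i + 1 : ℕ) : ℝ) : ℂ) + 2 * j = ((α : ℂ) + 2 * j) + ((i + 1 : ℕ) : ℂ) by
        push_cast; ring, cpow_add _ _ hx, cpow_natCast,
      show (α : ℂ) + 2 * k + 2 = ((i + 1 : ℕ) : ℂ) + ((α : ℂ) + 2 * k + 1 - i) by
        push_cast; ring, cpow_add _ _ hr', cpow_natCast, div_pow, mul_pow]
    field_simp
    ring
  rw [sum_congr rfl fun i _ => hsummand i, ← sum_mul, sum_range_pochC_neg_div_pochC_succ hβ,
    show ((2 * α + 2 * k + 1 + 2 * j : ℝ) : ℂ) + 1 = ((α : ℂ) + 2 * j) + ((α : ℂ) + 2 * k + 2) by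
      push_cast; ring, cpow_add _ _ hr', mul_comm ω, mul_div_assoc (r : ℂ), ofReal_mul_cpow hr,
    show (α : ℂ) + 2 * j + ((α : ℂ) + 2 * k + 2) = 2 * ((α : ℂ) + j + 1 + k) by ring]
  have := hβ k
  field_simp

/-- For `α > 0`, `k ∈ ℕ`, `ω ∈ ℂ \ {0}` and `r > 0`:
`∫₀^r J_α(ωs) s^(α+2k+1) ds = Σ_{i=0}^k (2^i (-k)_i / ω^(i+1)) J_{α+i+1}(ωr) r^(α+2k+1-i)`. -/
theorem besselJ_moment_integral (α : ℝ) (hα : 0 < α) (k : ℕ) (ω : ℂ) (hω : ω ≠ 0)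
    (r : ℝ) (hr : 0 < r) :
    (∫ s in (0 : ℝ)..r, besselJ α (ω * s) * (s : ℂ) ^ ((α : ℂ) + 2 * k + 1)) =
    ∑ i ∈ Finset.range (k + 1),
      (2 ^ i * pochC (-(k : ℂ)) i / ω ^ (i + 1)) * besselJ (α + i + 1) (ω * r) *
        (r : ℂ) ^ ((α : ℂ) + 2 * k + 1 - i) := by
  have hα' : -1 < α := by linarith
  have he : ∀ j : ℕ, -1 < 2 * α + 2 * k + 1 + 2 * j := fun j => by
    linarith [(k.cast_nonneg : (0 : ℝ) ≤ k), (j.cast_nonneg : (0 : ℝ) ≤ j)]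
  have hterm := fun j : ℕ => besselJ_moment_term_eq_sum hα' k j hω hr
  rw [intervalIntegral.integral_congr_ae (Filter.Eventually.of_forall fun s hs =>
      besselJ_mul_cpow_eq_tsum α k ω (Set.uIoc_of_le hr.le ▸ hs).1),
    intervalIntegral_tsum_mul_ofReal_cpow hr.le he ?_]
  · simp only [hterm, besselJ_eq_tsum, ← tsum_mul_left, ← tsum_mul_right]
    exact Summable.tsum_finsetSum fun i _ =>
      ((summable_besselJ_term (by positivity) _).mul_left _).mul_right _
  · simp only [hterm]
    exact (summable_sum fun i _ =>
      ((summable_besselJ_term (by positivity) _).mul_left _).mul_right _).norm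
end

section
/- For α ∈ ℝ, k ∈ ℕ₀, and n ∈ ℕ with α ∉ {−(k+1), −k, …, −n}, the series Σ_{j=0}^{∞} (−k)_{n+j−1} / (α+n)_{j+1} equals (−k)_{n−1} / (α+k+1). -/
/-- The Pochhammer symbol (rising factorial) `(a)_n = a(a+1)⋯(a+n-1)` in `ℝ`. -/
noncomputable def poch (a : ℝ) (n : ℕ) : ℝ := ∏ j ∈ Finset.range n, (a + j)

/-!
With `d = c - a - p`, the terms telescope:
`(a)_{p+j} / (c)_{j+1} = (a)_{p+j} / (d (c)_j) - (a)_{p+j+1} / (d (c)_{j+1})`,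
because `(c + j) - (a + p + j) = d`. For `a = -k` the Pochhammer symbol `(a)_{p+j}` vanishes
once `p + j > k`, so the series is a finite sum and collapses to its first term.
-/

lemma poch_succ (a : ℝ) (m : ℕ) : poch a (m + 1) = poch a m * (a + m) :=
  Finset.prod_range_succ _ _

lemma poch_ne_zero {c : ℝ} {j : ℕ} (h : ∀ i < j, c + i ≠ 0) : poch c j ≠ 0 :=
  Finset.prod_ne_zero_iff.mpr fun i hi => h i (Finset.mem_range.mp hi)

lemma poch_neg_nat_eq_zero {k m : ℕ} (h : k < m) : poch (-(k : ℝ)) m = 0 :=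
  Finset.prod_eq_zero (Finset.mem_range.mpr h) (by simp)

lemma sum_range_poch_div_poch (a c : ℝ) (p J : ℕ) (hd : c - a - p ≠ 0)
    (hc : ∀ i < J, c + i ≠ 0) :
    ∑ j ∈ Finset.range J, poch a (p + j) / poch c (j + 1) =
      poch a p / (c - a - p) - poch a (p + J) / ((c - a - p) * poch c J) := by
  induction J with
  | zero => simp [poch]
  | succ J ih =>
    have hcJ : poch c J ≠ 0 := poch_ne_zero fun i hi => hc i (by omega)
    have hcJ' : c + J ≠ 0 := hc J J.lt_succ_self
    rw [Finset.sum_range_succ, ih fun i hi => hc i (by omega), ← add_assoc, poch_succ a,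
      poch_succ c]
    push_cast
    field_simp
    ring

lemma tsum_poch_neg_nat_div_poch {k p : ℕ} (hp : p ≤ k) {c : ℝ} (hd : c + k - p ≠ 0)
    (hc : ∀ i, p + i ≤ k → c + i ≠ 0) :
    ∑' j, poch (-(k : ℝ)) (p + j) / poch c (j + 1) = poch (-(k : ℝ)) p / (c + k - p) := by
  have hd' : c - -(k : ℝ) - p ≠ 0 := by rwa [sub_neg_eq_add]
  rw [tsum_eq_sum (s := Finset.range (k + 1 - p)) fun j hj => by
      rw [poch_neg_nat_eq_zero (by simp at hj; omega), zero_div],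
    sum_range_poch_div_poch _ _ _ _ hd' fun i hi => hc i (by omega),
    poch_neg_nat_eq_zero (m := p + (k + 1 - p)) (by omega), zero_div, sub_zero, sub_neg_eq_add]

/-- For `α ∈ ℝ`, `k ∈ ℕ`, `n ≥ 1` with `α ∉ {-(k+1), -k, …, -n}`:
`Σ_{j≥0} (-k)_{n+j-1} / (α+n)_{j+1} = (-k)_{n-1} / (α+k+1)`. -/
theorem pochhammer_series_identity (α : ℝ) (k : ℕ) (n : ℕ) (hn : 1 ≤ n)
    (hα : ∀ t : ℕ, n ≤ t → t ≤ k + 1 → α ≠ -(t : ℝ)) :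
    (∑' j : ℕ, poch (-(k : ℝ)) (n + j - 1) / poch (α + n) (j + 1)) =
      poch (-(k : ℝ)) (n - 1) / (α + k + 1) := by
  obtain ⟨m, rfl⟩ : ∃ m, n = m + 1 := ⟨n - 1, by omega⟩
  simp only [show ∀ j, m + 1 + j - 1 = m + j from fun j => by omega, Nat.add_sub_cancel]
  rcases le_or_gt m k with hmk | hkm
  · have hα_add : ∀ t : ℕ, m + 1 ≤ t → t ≤ k + 1 → α + t ≠ 0 := fun t h₁ h₂ h =>
      hα t h₁ h₂ (eq_neg_of_add_eq_zero_left h)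
    have hd : α + (m + 1 : ℕ) + k - m = α + k + 1 := by push_cast; ring
    rw [tsum_poch_neg_nat_div_poch hmk (c := α + (m + 1 : ℕ)), hd]
    · rw [hd]
      simpa [add_assoc] using hα_add (k + 1) (by omega) le_rfl
    · intro i hi
      simpa [add_assoc] using hα_add (m + 1 + i) (by omega) (by omega)
  · have hvanish : ∀ j, poch (-(k : ℝ)) (m + j) = 0 := fun j => poch_neg_nat_eq_zero (by omega)
    simp [hvanish, poch_neg_nat_eq_zero hkm]
end
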